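/- Let T ≥ 0 and let ψ : ℝ → ℝ be differentiable, nonnegative on [T, ∞), convex on [T, ∞), and satisfy ψ(t) → ∞ as t → ∞. Then there exists T' ≥ T such that for all t ≥ T', ψ(t) ≤ 2·t·ψ'(t). -/
import Mathlib

/-- Asymptotic-convexity lemma: if `ψ : ℝ → ℝ` is differentiable, nonnegative and convex on
`[T, ∞)` (with `T ≥ 0`), and `ψ t → ∞` as `t → ∞`, then there is `T' ≥ T` such that
`ψ t ≤ 2 * t * ψ' t` for all `t ≥ T'`. -/
theorem stmt_13 (T : ℝ) (hT : 0 ≤ T) (ψ : ℝ → ℝ) (hdiff : Differentiable ℝ ψ)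
    (hnonneg : ∀ t ∈ Set.Ici T, 0 ≤ ψ t) (hconv : ConvexOn ℝ (Set.Ici T) ψ)
    (htop : Filter.Tendsto ψ Filter.atTop Filter.atTop) :
    ∃ T' : ℝ, T ≤ T' ∧ ∀ t : ℝ, T' ≤ t → ψ t ≤ 2 * t * deriv ψ t := by
  obtain ⟨M, hM⟩ := Filter.eventually_atTop.mp (htop.eventually_ge_atTop (2 * ψ T))
  refine ⟨max (T + 1) M, le_trans (by linarith) (le_max_left _ _), fun t ht => ?_⟩
  have htT : T < t := by
    have := le_trans (le_max_left (T+1) M) ht; linarith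
  have hψM : 2 * ψ T ≤ ψ t := hM t (le_trans (le_max_right _ _) ht)
  have hslope : slope ψ T t ≤ deriv ψ t :=
    hconv.slope_le_deriv (Set.self_mem_Ici) (le_of_lt htT) htT (hdiff t)
  have hψT : 0 ≤ ψ T := hnonneg T Set.self_mem_Ici
  rw [slope_def_field] at hslope
  have ht0 : 0 < t := lt_of_le_of_lt hT htT
  have hsub : 0 < t - T := by linarith
  have h1 : ψ t - ψ T ≤ (t - T) * deriv ψ t := by
    rw [div_le_iff₀ hsub] at hslope; linarith
  have hd : 0 ≤ deriv ψ t := by nlinarith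
  nlinarith
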